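/- arXiv:1410.7470 — 3 statements merged into one kernel-verified Lean document; each statement's English description precedes it below -/
import Mathlib

section
/- A subset of ℝ^n is a cubical area (i.e., admits a finite cubical cover) if and only if it has finitely many maximal subcubes; moreover in that case the maximal subcubes cover it. -/
open Set

/-- An `n`-cube: a product of `n` intervals (order-convex subsets) of `ℝ`. -/
def IsCube {n : ℕ} (C : Set (Fin n → ℝ)) : Prop :=
  ∃ I : Fin n → Set ℝ, (∀ i, (I i).OrdConnected) ∧ C = Set.pi Set.univ I

/-- A maximal subcube of `X`: a cube contained in `X`, maximal for inclusion. -/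
def IsMaxSubcube {n : ℕ} (C X : Set (Fin n → ℝ)) : Prop :=
  IsCube C ∧ C ⊆ X ∧ ∀ C', IsCube C' → C' ⊆ X → C ⊆ C' → C = C'

/-- A cubical area: a subset admitting a finite cover by cubes. -/
def CubicalArea {n : ℕ} (X : Set (Fin n → ℝ)) : Prop :=
  ∃ 𝒞 : Finset (Set (Fin n → ℝ)), (∀ C ∈ 𝒞, IsCube C) ∧ ⋃₀ ↑𝒞 = X

/-- A maximal subinterval of `X ⊆ ℝ`: an interval contained in `X`, maximal for inclusion. -/
def IsMaxSubinterval (J X : Set ℝ) : Prop :=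
  J.OrdConnected ∧ J ⊆ X ∧ ∀ J', J'.OrdConnected → J' ⊆ X → J ⊆ J' → J = J'

/-! Maximal subcubes exist by Zorn's lemma, since a directed union of cubes is again a cube; so
they always cover `X`, and finitely many of them form a finite cubical cover. Conversely, the
endpoints of the intervals of a finite cubical cover cut each axis into finitely many cells, and
`X` is a union of products of cells. Enlarging a subcube of `X` to all cells it meets keeps it a
subcube of `X`, so a maximal subcube is a union of products of cells, and there are only finitely
many such unions. -/

theorem Set.finite_setOf_preimage_image_eq {α β : Type*} [Finite β] (f : α → β) :
    {S : Set α | f ⁻¹' (f '' S) = S}.Finite :=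
  (finite_range (preimage f)).subset fun S hS => ⟨f '' S, hS⟩

section Signature

variable {α ι : Type*} (J : ι → Set α)

/-- When the `J k` are intervals, two points have the same signature iff no endpoint of a `J k`
separates them, i.e. they lie in the same cell of the grid cut out by these endpoints. -/
def closureSig [Preorder α] (s : α) : ι → Prop × Prop :=
  fun k => (s ∈ lowerClosure (J k), s ∈ upperClosure (J k))

variable {J}

lemma closureSig_eq_of_le_of_le [Preorder α] {a b y : α} (hay : a ≤ y) (hyb : y ≤ b)
    (h : closureSig J a = closureSig J b) : closureSig J y = closureSig J a := by
  funext k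
  have hk := congrFun h k
  simp only [closureSig, Prod.mk.injEq, eq_iff_iff] at hk ⊢
  exact ⟨⟨fun hy => (lowerClosure (J k)).lower hay hy,
      fun ha => (lowerClosure (J k)).lower hyb (hk.1.mp ha)⟩,
    ⟨fun hy => hk.2.mpr ((upperClosure (J k)).upper hyb hy),
      fun ha => (upperClosure (J k)).upper hay ha⟩⟩

lemma mem_of_closureSig_eq [Preorder α] {k : ι} (hJ : (J k).OrdConnected) {s t : α}
    (h : closureSig J s = closureSig J t) (hs : s ∈ J k) : t ∈ J k := by
  have hk := congrFun h k
  simp only [closureSig, Prod.mk.injEq, eq_iff_iff] at hk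
  rw [← hJ.upperClosure_inter_lowerClosure] at hs ⊢
  exact ⟨hk.2.mp hs.1, hk.1.mp hs.2⟩

lemma Set.OrdConnected.preimage_image_closureSig [LinearOrder α] {I : Set α}
    (hI : I.OrdConnected) : (closureSig J ⁻¹' (closureSig J '' I)).OrdConnected := by
  refine ⟨?_⟩
  rintro a ⟨t₁, ht₁, ha⟩ b ⟨t₂, ht₂, hb⟩ y ⟨hay, hyb⟩
  rcases le_or_gt y t₁ with hyt₁ | ht₁y
  · exact ⟨t₁, ht₁, ha.trans (closureSig_eq_of_le_of_le hay hyt₁ ha.symm).symm⟩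
  rcases le_or_gt t₂ y with ht₂y | hyt₂
  · exact ⟨t₂, ht₂, (closureSig_eq_of_le_of_le ht₂y hyb hb).symm⟩
  · exact ⟨y, hI.out ht₁ ht₂ ⟨ht₁y.le, hyt₂.le⟩, rfl⟩

end Signature

section Cubes

open Function

variable {n : ℕ}

lemma isCube_iff {C : Set (Fin n → ℝ)} :
    IsCube C ↔ (∀ i, (eval i '' C).OrdConnected) ∧ pi univ (fun i => eval i '' C) ⊆ C := by
  refine ⟨?_, fun h => ⟨_, h.1, (subset_pi_eval_image univ C).antisymm h.2⟩⟩
  rintro ⟨I, hI, rfl⟩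
  refine ⟨fun i => ?_, pi_mono fun i _ => eval_image_univ_pi_subset⟩
  rcases (pi univ I).eq_empty_or_nonempty with he | hne
  · simp only [he, image_empty, ordConnected_empty]
  · exact (eval_image_univ_pi hne).symm ▸ hI i

lemma DirectedOn.isCube_sUnion {c : Set (Set (Fin n → ℝ))} (hc : DirectedOn (· ⊆ ·) c)
    (hne : c.Nonempty) (hcube : ∀ C ∈ c, IsCube C) : IsCube (⋃₀ c) := by
  refine isCube_iff.2 ⟨fun i => ⟨?_⟩, ?_⟩
  · rintro _ ⟨y, hy, rfl⟩ _ ⟨z, hz, rfl⟩ t ht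
    obtain ⟨D, hD, hyzD⟩ := hc.exists_mem_subset_of_finite_of_subset_sUnion hne
      (toFinite {y, z}) (insert_subset hy (singleton_subset_iff.2 hz))
    have htD := ((isCube_iff.1 (hcube D hD)).1 i).out
      (mem_image_of_mem _ (hyzD (mem_insert y _)))
      (mem_image_of_mem _ (hyzD (mem_insert_of_mem y rfl))) ht
    exact image_mono (subset_sUnion_of_mem hD) htD
  · intro x hx
    choose y hy hyx using fun i => hx i (mem_univ i)
    obtain ⟨D, hD, hyD⟩ := hc.exists_mem_subset_of_finite_of_subset_sUnion hne
      (finite_range y) (range_subset_iff.2 hy)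
    refine subset_sUnion_of_mem hD ((isCube_iff.1 (hcube D hD)).2 fun i _ => ?_)
    exact ⟨y i, hyD (mem_range_self i), hyx i⟩

lemma IsCube.exists_isMaxSubcube_superset {C X : Set (Fin n → ℝ)} (hC : IsCube C)
    (hCX : C ⊆ X) : ∃ M, C ⊆ M ∧ IsMaxSubcube M X := by
  obtain ⟨M, hCM, hM⟩ := zorn_subset_nonempty {C | IsCube C ∧ C ⊆ X}
    (fun c hcS hc hne => ⟨⋃₀ c,
      ⟨hc.directedOn.isCube_sUnion hne fun C hC => (hcS hC).1,
        sUnion_subset fun C hC => (hcS hC).2⟩,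
      fun _ => subset_sUnion_of_mem⟩) C ⟨hC, hCX⟩
  exact ⟨M, hCM, hM.prop.1, hM.prop.2, fun C' hC' hC'X hMC' =>
    hM.eq_of_subset ⟨hC', hC'X⟩ hMC'⟩

lemma isCube_singleton (x : Fin n → ℝ) : IsCube {x} :=
  ⟨fun i => {x i}, fun _ => ordConnected_singleton, (univ_pi_singleton x).symm⟩

theorem sUnion_setOf_isMaxSubcube (X : Set (Fin n → ℝ)) :
    ⋃₀ {C | IsMaxSubcube C X} = X := by
  refine (sUnion_subset fun C hC => hC.2.1).antisymm fun x hx => ?_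
  obtain ⟨M, hxM, hM⟩ :=
    (isCube_singleton x).exists_isMaxSubcube_superset (singleton_subset_iff.2 hx)
  exact ⟨M, hM, hxM rfl⟩

theorem cubicalArea_of_finite_setOf_isMaxSubcube {X : Set (Fin n → ℝ)}
    (h : {C | IsMaxSubcube C X}.Finite) : CubicalArea X :=
  ⟨h.toFinset, fun C hC => (h.mem_toFinset.1 hC).1, by
    rw [h.coe_toFinset, sUnion_setOf_isMaxSubcube]⟩

lemma IsCube.preimage_image_piMap {γ : Type*} {g : Fin n → ℝ → γ}
    (hg : ∀ i (S : Set ℝ), S.OrdConnected → (g i ⁻¹' (g i '' S)).OrdConnected)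
    {C : Set (Fin n → ℝ)} (hC : IsCube C) : IsCube (Pi.map g ⁻¹' (Pi.map g '' C)) := by
  obtain ⟨I, hI, rfl⟩ := hC
  exact ⟨_, fun i => hg i _ (hI i), by rw [piMap_image_univ_pi]; rfl⟩

lemma IsMaxSubcube.preimage_image_eq {β : Type*} {f : (Fin n → ℝ) → β}
    {C X : Set (Fin n → ℝ)} (hC : IsMaxSubcube C X) (hX : f ⁻¹' (f '' X) ⊆ X)
    (hf : IsCube (f ⁻¹' (f '' C))) : f ⁻¹' (f '' C) = C :=
  (hC.2.2 _ hf ((preimage_mono (image_mono hC.2.1)).trans hX) (subset_preimage_image f C)).symm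

end Cubes

theorem CubicalArea.finite_setOf_isMaxSubcube {n : ℕ} {X : Set (Fin n → ℝ)}
    (h : CubicalArea X) : {C | IsMaxSubcube C X}.Finite := by
  obtain ⟨𝒞, h𝒞, rfl⟩ := h
  choose! I hI hCI using h𝒞
  set f := Pi.map fun i => closureSig fun C : 𝒞 => I C i
  have hsat : f ⁻¹' (f '' ⋃₀ 𝒞) ⊆ ⋃₀ 𝒞 := by
    rintro y ⟨x, ⟨C, hC, hxC⟩, hxy⟩
    refine ⟨C, hC, ?_⟩
    rw [hCI C hC] at hxC ⊢
    exact fun i _ =>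
      mem_of_closureSig_eq (k := ⟨C, hC⟩) (hI C hC i) (congrFun hxy i) (hxC i (mem_univ i))
  refine (finite_setOf_preimage_image_eq f).subset fun C hC => hC.preimage_image_eq hsat ?_
  exact hC.1.preimage_image_piMap fun i S hS => hS.preimage_image_closureSig

/-- A subset of `ℝⁿ` is a cubical area iff it has finitely many maximal subcubes;
in that case the maximal subcubes cover it. -/
theorem stmt7 {n : ℕ} (X : Set (Fin n → ℝ)) :
    (CubicalArea X ↔ {C | IsMaxSubcube C X}.Finite) ∧
    (CubicalArea X → ⋃₀ {C | IsMaxSubcube C X} = X) := by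
  exact ⟨⟨CubicalArea.finite_setOf_isMaxSubcube, cubicalArea_of_finite_setOf_isMaxSubcube⟩,
    fun _ => sUnion_setOf_isMaxSubcube X⟩
end

section
/- The collection B_{ℝ^n} of all cubical areas of ℝ^n forms a Boolean subalgebra of the powerset of ℝ^n: it contains ∅ and ℝ^n and is closed under binary union, binary intersection, and complementation. -/
open Set

/- The one real point is the complement: outside an interval `S` of a linear order lie exactly
the strict lower bounds and the strict upper bounds of `S`, two intervals. Hence the complement
of a cube `∏ Iᵢ` is the finite union over `i` of the slabs `{x | xᵢ ∉ Iᵢ}`, each a union of two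
cubes, and the complement of a finite union of cubes is a finite intersection of such areas.
Intersections of areas reduce to intersections of cubes, which are cubes. -/

theorem Set.OrdConnected.compl_eq {α : Type*} [LinearOrder α] {S : Set α}
    (hS : S.OrdConnected) : Sᶜ = (⋂ y ∈ S, Iio y) ∪ ⋂ y ∈ S, Ioi y := by
  ext x
  simp only [mem_compl_iff, mem_union, mem_iInter, mem_Iio, mem_Ioi]
  refine ⟨fun hx => ?_, ?_⟩
  · by_contra! h
    obtain ⟨⟨y, hy, hyx⟩, ⟨z, hz, hxz⟩⟩ := h
    exact hx (hS.out hy hz ⟨hyx, hxz⟩)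
  · rintro (h | h) hx <;> exact lt_irrefl x (h x hx)

section CubicalArea

variable {n : ℕ}

theorem isCube_eval_preimage (i : Fin n) {S : Set ℝ} (hS : S.OrdConnected) :
    IsCube (Function.eval i ⁻¹' S) := by
  refine ⟨Function.update (fun _ => univ) i S, fun j => ?_, eval_preimage⟩
  rcases eq_or_ne j i with rfl | hj
  · simpa using hS
  · simpa [Function.update_of_ne hj] using ordConnected_univ

theorem IsCube.inter {C D : Set (Fin n → ℝ)} (hC : IsCube C) (hD : IsCube D) :
    IsCube (C ∩ D) := by
  obtain ⟨I, hI, rfl⟩ := hC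
  obtain ⟨J, hJ, rfl⟩ := hD
  exact ⟨fun i => I i ∩ J i, fun i => (hI i).inter (hJ i), pi_inter_distrib.symm⟩

theorem IsCube.cubicalArea {C : Set (Fin n → ℝ)} (hC : IsCube C) : CubicalArea C :=
  ⟨{C}, by simpa using hC, by simp⟩

theorem cubicalArea_empty : CubicalArea (∅ : Set (Fin n → ℝ)) :=
  ⟨∅, by simp, by simp⟩

theorem cubicalArea_univ : CubicalArea (univ : Set (Fin n → ℝ)) :=
  IsCube.cubicalArea ⟨fun _ => univ, fun _ => ordConnected_univ, pi_univ univ |>.symm⟩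

theorem CubicalArea.union {X Y : Set (Fin n → ℝ)} (hX : CubicalArea X) (hY : CubicalArea Y) :
    CubicalArea (X ∪ Y) := by
  classical
  obtain ⟨𝒞, h𝒞, rfl⟩ := hX
  obtain ⟨𝒟, h𝒟, rfl⟩ := hY
  refine ⟨𝒞 ∪ 𝒟, fun C hC => ?_, by rw [Finset.coe_union, sUnion_union]⟩
  rcases Finset.mem_union.mp hC with h | h
  exacts [h𝒞 C h, h𝒟 C h]

theorem cubicalArea_biUnion {ι : Type*} (s : Finset ι) {X : ι → Set (Fin n → ℝ)}
    (hX : ∀ i ∈ s, CubicalArea (X i)) : CubicalArea (⋃ i ∈ s, X i) := by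
  classical
  induction s using Finset.induction_on with
  | empty => simpa using cubicalArea_empty
  | insert i s _ ih =>
    rw [Finset.set_biUnion_insert]
    exact (hX i (s.mem_insert_self i)).union (ih fun j hj => hX j (Finset.mem_insert_of_mem hj))

theorem CubicalArea.inter_isCube {X C : Set (Fin n → ℝ)} (hX : CubicalArea X) (hC : IsCube C) :
    CubicalArea (X ∩ C) := by
  classical
  obtain ⟨𝒞, h𝒞, rfl⟩ := hX
  refine ⟨𝒞.image (· ∩ C), ?_, ?_⟩
  · simpa using fun D hD => (h𝒞 D hD).inter hC
  · simp [sUnion_eq_biUnion, iUnion₂_inter]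

theorem CubicalArea.inter {X Y : Set (Fin n → ℝ)} (hX : CubicalArea X) (hY : CubicalArea Y) :
    CubicalArea (X ∩ Y) := by
  obtain ⟨𝒟, h𝒟, rfl⟩ := hY
  rw [sUnion_eq_biUnion, inter_iUnion₂]
  simpa using cubicalArea_biUnion 𝒟 fun D hD => hX.inter_isCube (h𝒟 D hD)

theorem cubicalArea_biInter {ι : Type*} (s : Finset ι) {X : ι → Set (Fin n → ℝ)}
    (hX : ∀ i ∈ s, CubicalArea (X i)) : CubicalArea (⋂ i ∈ s, X i) := by
  classical
  induction s using Finset.induction_on with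
  | empty => simpa using cubicalArea_univ
  | insert i s _ ih =>
    rw [Finset.set_biInter_insert]
    exact (hX i (s.mem_insert_self i)).inter (ih fun j hj => hX j (Finset.mem_insert_of_mem hj))

theorem IsCube.cubicalArea_compl {C : Set (Fin n → ℝ)} (hC : IsCube C) : CubicalArea Cᶜ := by
  obtain ⟨I, hI, rfl⟩ := hC
  have hslab : ∀ i, CubicalArea (Function.eval i ⁻¹' (I i)ᶜ) := fun i => by
    rw [(hI i).compl_eq, preimage_union]
    exact
      (isCube_eval_preimage i (ordConnected_biInter fun _ _ => ordConnected_Iio)).cubicalArea.union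
        (isCube_eval_preimage i (ordConnected_biInter fun _ _ => ordConnected_Ioi)).cubicalArea
  have hcompl : (pi univ I)ᶜ = ⋃ i ∈ Finset.univ, Function.eval i ⁻¹' (I i)ᶜ := by
    ext x
    simp
  rw [hcompl]
  exact cubicalArea_biUnion _ fun i _ => hslab i

theorem CubicalArea.compl {X : Set (Fin n → ℝ)} (hX : CubicalArea X) : CubicalArea Xᶜ := by
  obtain ⟨𝒞, h𝒞, rfl⟩ := hX
  rw [sUnion_eq_biUnion, compl_iUnion₂]
  simpa using cubicalArea_biInter 𝒞 fun C hC => (h𝒞 C hC).cubicalArea_compl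

end CubicalArea

/-- The cubical areas of `ℝⁿ` form a boolean subalgebra of the powerset of `ℝⁿ`. -/
theorem stmt10 {n : ℕ} :
    CubicalArea (∅ : Set (Fin n → ℝ)) ∧
    CubicalArea (Set.univ : Set (Fin n → ℝ)) ∧
    (∀ X Y : Set (Fin n → ℝ), CubicalArea X → CubicalArea Y → CubicalArea (X ∪ Y)) ∧
    (∀ X Y : Set (Fin n → ℝ), CubicalArea X → CubicalArea Y → CubicalArea (X ∩ Y)) ∧
    (∀ X : Set (Fin n → ℝ), CubicalArea X → CubicalArea Xᶜ) :=
  ⟨cubicalArea_empty, cubicalArea_univ, fun _ _ => CubicalArea.union,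
    fun _ _ => CubicalArea.inter, fun _ => CubicalArea.compl⟩
end

section
/- The tensor product (in the category of semilattices with zero) of two Boolean algebras is a Boolean algebra. -/
/-! Two sup-and-bot-preserving maps `A ⊗ B → Prop` that agree on pure tensors are equal. This
shows that every element is a finite join of pure tensors, and, through the characters
`x ↦ ¬ x ≤ t`, that the order of `A ⊗ B` is detected by the `Prop`-valued bimorphisms.
Restricting a bimorphism to a rectangle, `g (· ⊓ c) (· ⊓ d)`, gives again a bimorphism; with this,
the join of the pairwise meets `(a ⊓ c) ⊗ (b ⊓ d)` is the meet of two finite joins of pure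
tensors, so `A ⊗ B` is a distributive lattice with top `⊤ ⊗ ⊤`. There `a ⊗ b` has the complement
`aᶜ ⊗ ⊤ ⊔ ⊤ ⊗ bᶜ`, and complemented elements of a distributive lattice are closed under finite
joins. -/

/-- A bimorphism of join-semilattices with zero: separately a sup- and bot-preserving
map in each variable. -/
def SlatzBimorphism {A B T : Type*} [SemilatticeSup A] [OrderBot A]
    [SemilatticeSup B] [OrderBot B] [SemilatticeSup T] [OrderBot T]
    (i : A → B → T) : Prop :=
  (∀ b, i ⊥ b = ⊥) ∧ (∀ a, i a ⊥ = ⊥) ∧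
  (∀ a a' b, i (a ⊔ a') b = i a b ⊔ i a' b) ∧
  (∀ a b b', i a (b ⊔ b') = i a b ⊔ i a b')

/-- `i : A → B → T` exhibits `T` as the tensor product `A ⊗ B` in the category of
join-semilattices with zero: `i` is a bimorphism through which every bimorphism
factors uniquely by a morphism of semilattices with zero. -/
def IsSlatzTensor {A B T : Type*} [SemilatticeSup A] [OrderBot A]
    [SemilatticeSup B] [OrderBot B] [SemilatticeSup T] [OrderBot T]
    (i : A → B → T) : Prop :=
  SlatzBimorphism i ∧
  ∀ (X : Type) (_ : SemilatticeSup X) (_ : OrderBot X) (f : A → B → X),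
    SlatzBimorphism f →
      ∃! h : T → X, (∀ s t : T, h (s ⊔ t) = h s ⊔ h t) ∧ h ⊥ = ⊥ ∧
        ∀ a b, h (i a b) = f a b

open Function Finset
open scoped FinsetFamily

theorem Finset.sup_Prop_iff {α : Type*} {s : Finset α} {p : α → Prop} :
    s.sup p ↔ ∃ a ∈ s, p a := by
  simp [Finset.sup_eq_iSup]

section Characters

variable {T : Type*} [SemilatticeSup T] [OrderBot T]

def SupBotHom.notLE (t : T) : SupBotHom T Prop where
  toFun x := ¬x ≤ t
  map_sup' x y := by rw [sup_le_iff, not_and_or]; rfl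
  map_bot' := by simp

theorem le_of_forall_supBotHom_imp {x y : T} (H : ∀ χ : SupBotHom T Prop, χ x → χ y) :
    x ≤ y :=
  not_not.1 fun hxy => H (SupBotHom.notLE y) hxy le_rfl

end Characters

namespace SlatzBimorphism

section SemilatticeSup

variable {A B X : Type*} [SemilatticeSup A] [OrderBot A] [SemilatticeSup B] [OrderBot B]
  [SemilatticeSup X] [OrderBot X] {g : A → B → X}

theorem mono (hg : SlatzBimorphism g) {a a' : A} {b b' : B} (ha : a ≤ a') (hb : b ≤ b') :
    g a b ≤ g a' b' :=
  calc g a b ≤ g a b ⊔ g a' b := le_sup_left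
    _ = g a' b := by rw [← hg.2.2.1, sup_eq_right.2 ha]
    _ ≤ g a' b ⊔ g a' b' := le_sup_left
    _ = g a' b' := by rw [← hg.2.2.2, sup_eq_right.2 hb]

theorem supBotHom_comp {Y : Type*} [SemilatticeSup Y] [OrderBot Y] (hg : SlatzBimorphism g)
    (χ : SupBotHom X Y) : SlatzBimorphism fun a b => χ (g a b) := by
  refine ⟨fun b => ?_, fun a => ?_, fun a a' b => ?_, fun a b b' => ?_⟩ <;>
    simp only [hg.1, hg.2.1, hg.2.2.1, hg.2.2.2, map_bot, map_sup]

end SemilatticeSup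

section DistribLattice

variable {A B X : Type*} [DistribLattice A] [OrderBot A] [DistribLattice B] [OrderBot B]
  [SemilatticeSup X] [OrderBot X] {g : A → B → X}

theorem comp_inf (hg : SlatzBimorphism g) (c : A) (d : B) :
    SlatzBimorphism fun a b => g (a ⊓ c) (b ⊓ d) := by
  refine ⟨fun b => ?_, fun a => ?_, fun a a' b => ?_, fun a b b' => ?_⟩ <;>
    simp only [bot_inf_eq, inf_sup_right, hg.1, hg.2.1, hg.2.2.1, hg.2.2.2]

end DistribLattice

end SlatzBimorphism

namespace IsSlatzTensor

section SemilatticeSup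

variable {A B T : Type*} [SemilatticeSup A] [OrderBot A] [SemilatticeSup B] [OrderBot B]
  [SemilatticeSup T] [OrderBot T] {i : A → B → T}

theorem exists_lift (h : IsSlatzTensor i) {X : Type} [SemilatticeSup X] [OrderBot X]
    {g : A → B → X} (hg : SlatzBimorphism g) : ∃ χ : SupBotHom T X, ∀ a b, χ (i a b) = g a b :=
  let ⟨χ, ⟨hsup, hbot, hχ⟩, _⟩ := h.2 X inferInstance inferInstance g hg
  ⟨⟨⟨χ, hsup⟩, hbot⟩, hχ⟩

theorem supBotHom_ext (h : IsSlatzTensor i) {X : Type} [SemilatticeSup X] [OrderBot X]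
    {χ ψ : SupBotHom T X} (hχψ : ∀ a b, χ (i a b) = ψ (i a b)) : χ = ψ :=
  DFunLike.coe_injective <| (h.2 X inferInstance inferInstance _ (h.1.supBotHom_comp ψ)).unique
    ⟨map_sup χ, map_bot χ, hχψ⟩ ⟨map_sup ψ, map_bot ψ, fun _ _ => rfl⟩

theorem exists_finset_sup_eq (h : IsSlatzTensor i) (t : T) :
    ∃ s : Finset (A × B), s.sup (uncurry i) = t := by
  classical
  let Q : T → Prop := fun x =>
    ∃ s : Finset (A × B), x ≤ s.sup (uncurry i) ∧ s.sup (uncurry i) ≤ t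
  have hQ_sup : ∀ x y, Q (x ⊔ y) ↔ Q x ∧ Q y := by
    refine fun x y => ⟨fun ⟨s, hxy, hs⟩ => ⟨⟨s, le_sup_left.trans hxy, hs⟩,
      ⟨s, le_sup_right.trans hxy, hs⟩⟩, fun ⟨⟨s, hx, hs⟩, ⟨s', hy, hs'⟩⟩ => ⟨s ∪ s', ?_, ?_⟩⟩
    · rw [sup_union]; exact sup_le_sup hx hy
    · rw [sup_union]; exact sup_le hs hs'
  let notQ : SupBotHom T Prop :=
    { toFun x := ¬Q x
      map_sup' x y := by simp only [hQ_sup, not_and_or]; rfl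
      map_bot' := by simpa using ⟨∅, le_rfl, bot_le⟩ }
  -- `¬Q` and the character of `t` agree on pure tensors, so they agree at `t` itself
  have hQ : notQ = SupBotHom.notLE t := h.supBotHom_ext fun a b => propext <| not_congr
    ⟨fun ⟨_, hs, hst⟩ => hs.trans hst, fun hab => ⟨{(a, b)}, by simp, by simpa using hab⟩⟩
  have hQt : (¬Q t) = ¬t ≤ t := DFunLike.congr_fun hQ t
  obtain ⟨s, hts, hst⟩ : Q t := not_not.1 fun hnQ => (hQt ▸ hnQ) le_rfl
  exact ⟨s, le_antisymm hst hts⟩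

theorem tensor_le_finset_sup_iff (h : IsSlatzTensor i) {s : Finset (A × B)} {a : A} {b : B} :
    i a b ≤ s.sup (uncurry i) ↔
      ∀ g : A → B → Prop, SlatzBimorphism g → g a b → ∃ p ∈ s, g p.1 p.2 := by
  refine ⟨fun hle g hg hab => ?_, fun H => le_of_forall_supBotHom_imp fun χ hχ => ?_⟩
  · obtain ⟨χ, hχ⟩ := h.exists_lift hg
    have := OrderHomClass.mono χ hle ((hχ a b).symm ▸ hab)
    simpa [map_finset_sup, Finset.sup_Prop_iff, hχ] using this
  · obtain ⟨p, hp, hχp⟩ := H _ (h.1.supBotHom_comp χ) hχ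
    exact OrderHomClass.mono χ (le_sup (f := uncurry i) hp) hχp

theorem le_tensor_top_top [OrderTop A] [OrderTop B] (h : IsSlatzTensor i) (x : T) :
    x ≤ i ⊤ ⊤ := by
  obtain ⟨s, rfl⟩ := h.exists_finset_sup_eq x
  exact Finset.sup_le fun _ _ => h.1.mono le_top le_top

end SemilatticeSup

section DistribLattice

variable {A B T : Type*} [DistribLattice A] [OrderBot A] [DistribLattice B] [OrderBot B]
  [SemilatticeSup T] [OrderBot T] {i : A → B → T}

theorem le_finset_sup_infs [DecidableEq A] [DecidableEq B] (h : IsSlatzTensor i)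
    {s t : Finset (A × B)} {w : T} (hs : w ≤ s.sup (uncurry i)) (ht : w ≤ t.sup (uncurry i)) :
    w ≤ (s ⊼ t).sup (uncurry i) := by
  obtain ⟨u, rfl⟩ := h.exists_finset_sup_eq w
  refine Finset.sup_le fun ⟨a, b⟩ hab => h.tensor_le_finset_sup_iff.2 fun g hg hgab => ?_
  have hs := h.tensor_le_finset_sup_iff.1 (Finset.sup_le_iff.1 hs _ hab)
  have ht := h.tensor_le_finset_sup_iff.1 (Finset.sup_le_iff.1 ht _ hab)
  obtain ⟨q, hq, hgq⟩ := ht _ (hg.comp_inf a b) (by simpa using hgab)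
  obtain ⟨p, hp, hgp⟩ := hs _ (hg.comp_inf q.1 q.2) (by simpa [inf_comm] using hgq)
  exact ⟨p ⊓ q, inf_mem_infs hp hq, hgp⟩

theorem isGLB_finset_sup_infs [DecidableEq A] [DecidableEq B] (h : IsSlatzTensor i)
    (s t : Finset (A × B)) :
    IsGLB {s.sup (uncurry i), t.sup (uncurry i)} ((s ⊼ t).sup (uncurry i)) := by
  have hmono : Monotone (uncurry i) := fun p q hpq => h.1.mono hpq.1 hpq.2
  refine ⟨?_, fun w hw => h.le_finset_sup_infs (hw (by simp)) (hw (by simp))⟩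
  rintro _ (rfl | rfl) <;> refine Finset.sup_le fun _ hpq => ?_ <;>
    obtain ⟨p, hp, q, hq, rfl⟩ := mem_infs.1 hpq
  · exact (hmono inf_le_left).trans (le_sup hp)
  · exact (hmono inf_le_right).trans (le_sup hq)

theorem exists_isGLB_pair (h : IsSlatzTensor i) (x y : T) : ∃ z, IsGLB {x, y} z := by
  classical
  obtain ⟨s, rfl⟩ := h.exists_finset_sup_eq x
  obtain ⟨t, rfl⟩ := h.exists_finset_sup_eq y
  exact ⟨_, h.isGLB_finset_sup_infs s t⟩

end DistribLattice

section Lattice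

variable {A B T : Type*} [DistribLattice A] [OrderBot A] [DistribLattice B] [OrderBot B]
  [Lattice T] [OrderBot T] {i : A → B → T}

theorem finset_sup_infs [DecidableEq A] [DecidableEq B] (h : IsSlatzTensor i)
    (s t : Finset (A × B)) :
    (s ⊼ t).sup (uncurry i) = s.sup (uncurry i) ⊓ t.sup (uncurry i) :=
  (h.isGLB_finset_sup_infs s t).unique isGLB_pair

theorem tensor_inf_tensor (h : IsSlatzTensor i) (a c : A) (b d : B) :
    i a b ⊓ i c d = i (a ⊓ c) (b ⊓ d) := by
  classical
  simpa using (h.finset_sup_infs {(a, b)} {(c, d)}).symm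

theorem inf_sup_le (h : IsSlatzTensor i) (x y z : T) : x ⊓ (y ⊔ z) ≤ x ⊓ y ⊔ x ⊓ z := by
  classical
  obtain ⟨s, rfl⟩ := h.exists_finset_sup_eq x
  obtain ⟨t, rfl⟩ := h.exists_finset_sup_eq y
  obtain ⟨u, rfl⟩ := h.exists_finset_sup_eq z
  rw [← sup_union, ← h.finset_sup_infs, ← h.finset_sup_infs, ← h.finset_sup_infs,
    infs_union_right, sup_union]

end Lattice

section BooleanAlgebra

variable {A B T : Type*} [BooleanAlgebra A] [BooleanAlgebra B] [DistribLattice T]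
  [BoundedOrder T] {i : A → B → T}

theorem isCompl_tensor (h : IsSlatzTensor i) (a : A) (b : B) :
    IsCompl (i a b) (i aᶜ ⊤ ⊔ i ⊤ bᶜ) := by
  classical
  constructor
  · rw [disjoint_iff, inf_sup_left, h.tensor_inf_tensor, h.tensor_inf_tensor, inf_compl_eq_bot,
      inf_compl_eq_bot, h.1.1, h.1.2.1, sup_bot_eq]
  · have htop : i ⊤ ⊤ = i a b ⊔ i a bᶜ ⊔ i aᶜ ⊤ := by
      rw [← h.1.2.2.2, sup_compl_eq_top, ← h.1.2.2.1, sup_compl_eq_top]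
    rw [codisjoint_iff_le_sup, ← le_top.antisymm (h.le_tensor_top_top ⊤), htop]
    exact sup_le (sup_le le_sup_left (le_sup_of_le_right (le_sup_of_le_right
      (h.1.mono le_top le_rfl)))) (le_sup_of_le_right le_sup_left)

theorem complementedLattice (h : IsSlatzTensor i) : ComplementedLattice T := by
  refine ⟨fun x => ?_⟩
  obtain ⟨s, rfl⟩ := h.exists_finset_sup_eq x
  exact Finset.sup_induction isComplemented_bot (fun _ hx _ hy => hx.sup hy)
    fun p _ => ⟨_, h.isCompl_tensor p.1 p.2⟩

end BooleanAlgebra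

end IsSlatzTensor

/-- The tensor product (in the category of semilattices with zero) of two Boolean
algebras carries a Boolean algebra structure extending its join and zero. -/
theorem stmt16 {A B T : Type*} [BooleanAlgebra A] [BooleanAlgebra B]
    [SemilatticeSup T] [OrderBot T] (i : A → B → T) (h : IsSlatzTensor i) :
    ∃ ba : BooleanAlgebra T,
      (∀ x y : T, ba.toDistribLattice.toLattice.toSemilatticeSup.sup x y = x ⊔ y) ∧
      ba.toBot.bot = (⊥ : T) := by
  choose inf isGLB_inf using h.exists_isGLB_pair
  let _ : Lattice T := .ofIsLUBofIsGLB (· ⊔ ·) inf (fun _ _ => isLUB_pair) isGLB_inf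
  let _ : DistribLattice T := .ofInfSupLe h.inf_sup_le
  let _ : BoundedOrder T := { top := i ⊤ ⊤, le_top := h.le_tensor_top_top }
  have : ComplementedLattice T := h.complementedLattice
  exact ⟨DistribLattice.booleanAlgebraOfComplemented T, fun _ _ => rfl, rfl⟩
end
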